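/- arXiv:2206.15019 — 2 statements merged into one kernel-verified Lean document; each statement's English description precedes it below -/
import Mathlib

section
/- Let X and K be real Hilbert spaces, f ∈ Γ₀(X), and A : X → K a bounded linear operator. Set S_pLAL := argmin_{x∈X}(f(x) + ι_{{0}}(Ax)) (the minimizers of f over the null space of A) and S_dLAL := argmin_{ν∈K} f*(A*ν). Assume S_pLAL ≠ ∅, S_dLAL ≠ ∅, and min_{x∈X}(f(x) + ι_{{0}}(Ax)) = −min_{ν∈K} f*(A*ν). Define the LAL operator T_LAL : X × K → X × K : (x, ν) ↦ (x_T, ν_T) by x_T := prox_f(x − A*Ax + A*ν) and ν_T := ν − A x_T. Then Fix(T_LAL) = S_pLAL × S_dLAL. -/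
noncomputable section

open Filter Topology Bornology
open scoped InnerProductSpace Pointwise Classical

/-- A function with values in the extended reals is *proper* if it is somewhere finite
and nowhere `⊥`. -/
def EProper {H : Type*} (f : H → EReal) : Prop :=
  (∃ x, f x ≠ ⊤) ∧ ∀ x, f x ≠ ⊥

/-- Convexity for extended-real-valued functions. -/
def EConvex {H : Type*} [AddCommGroup H] [Module ℝ H] (f : H → EReal) : Prop :=
  ∀ x y : H, ∀ a b : ℝ, 0 ≤ a → 0 ≤ b → a + b = 1 →
    f (a • x + b • y) ≤ (a : EReal) * f x + (b : EReal) * f y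

/-- The class `Γ₀(H)` of proper lower semicontinuous convex functions `H → (-∞, +∞]`. -/
def Gamma0 {H : Type*} [NormedAddCommGroup H] [NormedSpace ℝ H] (f : H → EReal) : Prop :=
  EProper f ∧ LowerSemicontinuous f ∧ EConvex f

/-- Effective domain `dom f = {x | f x < ∞}`. -/
def edom {H : Type*} (f : H → EReal) : Set H := {x | f x ≠ ⊤}

/-- Set of global minimizers of `f`. -/
def argminSet {H : Type*} (f : H → EReal) : Set H := {x | ∀ y, f x ≤ f y}

/-- Fenchel conjugate `f*(u) = sup_x (⟪x,u⟫ - f x)`. -/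
def econj {H : Type*} [NormedAddCommGroup H] [InnerProductSpace ℝ H]
    (f : H → EReal) (u : H) : EReal :=
  ⨆ x : H, ((⟪x, u⟫_ℝ : EReal) - f x)

/-- Subdifferential `∂f(x) = {u | ∀ y, ⟪y - x, u⟫ + f x ≤ f y}`. -/
def esubdiff {H : Type*} [NormedAddCommGroup H] [InnerProductSpace ℝ H]
    (f : H → EReal) (x : H) : Set H :=
  {u | ∀ y : H, ((⟪y - x, u⟫_ℝ : ℝ) : EReal) + f x ≤ f y}

/-- `p` is the proximal point of `f` at `x`, i.e. a minimizer of
`y ↦ f y + (1/2)‖y - x‖²` (which is unique for `f ∈ Γ₀`). -/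
def IsProxPt {H : Type*} [NormedAddCommGroup H] (f : H → EReal) (x p : H) : Prop :=
  ∀ y : H, f p + ((((1:ℝ)/2) * ‖p - x‖ ^ 2 : ℝ) : EReal)
    ≤ f y + ((((1:ℝ)/2) * ‖y - x‖ ^ 2 : ℝ) : EReal)

/-- Indicator function of a set, with values in the extended reals. -/
def eind {H : Type*} (C : Set H) : H → EReal := fun x => if x ∈ C then 0 else ⊤

/-- Strong relative interior: the points `x ∈ C` such that the cone generated by `C - x`
coincides with the closed linear span of `C - x`. -/
def sriSet {H : Type*} [NormedAddCommGroup H] [NormedSpace ℝ H] (C : Set H) : Set H :=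
  {x | x ∈ C ∧
    {y | ∃ t : ℝ, 0 < t ∧ ∃ c ∈ C, y = t • (c - x)} =
      closure ((Submodule.span ℝ ((fun c => c - x) '' C) : Submodule ℝ H) : Set H)}

/-! A pair `(x, ν)` is fixed by `T_LAL` iff `A x = 0` and `x = prox_f (x + A* ν)`, i.e. iff
`(x, ν)` solves the KKT system `A x = 0`, `A* ν ∈ ∂f(x)`. For a KKT pair, Fenchel–Young holds with
equality: `f x + f*(A* ν) = ⟪A x, ν⟫ = 0`, and weak duality then makes `x` primal and `ν` dual
optimal. Conversely, for optimal `x` and `ν` the zero duality gap forces `f x + f*(A* ν) = 0`,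
which is the equality case of Fenchel–Young, i.e. `A* ν ∈ ∂f(x)`. -/

lemma le_of_forall_le_add_mul {a b e : ℝ} (h : ∀ t : ℝ, 0 < t → t ≤ 1 → a ≤ b + t * e) :
    a ≤ b := by
  have hlim : Tendsto (fun t : ℝ => b + t * e) (𝓝[>] 0) (𝓝 b) :=
    tendsto_nhdsWithin_of_tendsto_nhds
      ((continuous_const.add (continuous_id.mul continuous_const)).tendsto' 0 b (by simp))
  refine ge_of_tendsto hlim ?_
  filter_upwards [Ioc_mem_nhdsGT one_pos] with t ht using h t ht.1 ht.2

lemma IsProxPt.ne_top {H : Type*} [NormedAddCommGroup H] {f : H → EReal} {z x : H}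
    (h : IsProxPt f z x) (hf : ∃ y, f y ≠ ⊤) : f x ≠ ⊤ := by
  obtain ⟨y, hy⟩ := hf
  intro hx
  have := h y
  rw [hx, EReal.top_add_coe, top_le_iff] at this
  exact (EReal.add_lt_top hy (EReal.coe_ne_top _)).ne this

section ConvexAnalysis

variable {H : Type*} [NormedAddCommGroup H] [InnerProductSpace ℝ H] {f : H → EReal}

lemma inner_sub_le_econj (f : H → EReal) (x u : H) : (⟪x, u⟫_ℝ : EReal) - f x ≤ econj f u :=
  le_iSup (fun y => (⟪y, u⟫_ℝ : EReal) - f y) x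

lemma econj_ne_bot (hf : ∃ x, f x ≠ ⊤) (u : H) : econj f u ≠ ⊥ := by
  obtain ⟨x, hx⟩ := hf
  refine ne_bot_of_le_ne_bot ?_ (inner_sub_le_econj f x u)
  revert hx
  induction f x using EReal.rec <;> simp [← EReal.coe_sub]

lemma mem_esubdiff_iff_econj_le {x u : H} {r : ℝ} (hx : f x = r) :
    u ∈ esubdiff f x ↔ econj f u ≤ ((⟪x, u⟫_ℝ - r : ℝ) : EReal) := by
  rw [econj, iSup_le_iff, esubdiff, Set.mem_ofPred_eq, hx]
  refine forall_congr' fun y => ?_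
  induction f y using EReal.rec with
  | bot => simp [-EReal.coe_sub]
  | top => simp
  | coe s =>
    rw [← EReal.coe_sub, ← EReal.coe_add, EReal.coe_le_coe_iff, EReal.coe_le_coe_iff,
      inner_sub_left]
    constructor <;> intro h <;> linarith

lemma ne_top_of_mem_esubdiff {x u : H} (hu : u ∈ esubdiff f x) (hf : ∃ y, f y ≠ ⊤) :
    f x ≠ ⊤ := by
  obtain ⟨y, hy⟩ := hf
  intro hx
  have := hu y
  rw [hx, EReal.add_top_of_ne_bot (EReal.coe_ne_bot _), top_le_iff] at this
  exact hy this

lemma inner_sub_nonneg_of_mem_esubdiff (hb : ∀ y, f y ≠ ⊥) {x y u v : H} (hx : f x ≠ ⊤)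
    (hy : f y ≠ ⊤) (hu : u ∈ esubdiff f x) (hv : v ∈ esubdiff f y) : 0 ≤ ⟪x - y, u - v⟫_ℝ := by
  have hux := hu y
  have hvy := hv x
  rw [← EReal.coe_toReal hx (hb x), ← EReal.coe_toReal hy (hb y)] at hux hvy
  norm_cast at hux hvy
  rw [← neg_sub x y, inner_neg_left] at hux
  rw [inner_sub_right]
  linarith

lemma isProxPt_of_sub_mem_esubdiff {z x : H} (h : z - x ∈ esubdiff f x) : IsProxPt f z x := by
  intro y
  have hnorm : (1 : ℝ) / 2 * ‖x - z‖ ^ 2 ≤ ⟪y - x, z - x⟫_ℝ + 1 / 2 * ‖y - z‖ ^ 2 := by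
    rw [show y - z = (y - x) + (x - z) by abel, norm_add_sq_real,
      show z - x = -(x - z) by abel, inner_neg_right]
    nlinarith [sq_nonneg ‖y - x‖]
  calc f x + (((1 : ℝ) / 2 * ‖x - z‖ ^ 2 : ℝ) : EReal)
      ≤ f x + ((⟪y - x, z - x⟫_ℝ + 1 / 2 * ‖y - z‖ ^ 2 : ℝ) : EReal) := by gcongr
    _ = ((⟪y - x, z - x⟫_ℝ : ℝ) : EReal) + f x + ((1 / 2 * ‖y - z‖ ^ 2 : ℝ) : EReal) := by
      rw [EReal.coe_add]; abel
    _ ≤ f y + ((1 / 2 * ‖y - z‖ ^ 2 : ℝ) : EReal) := by gcongr; exact h y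

lemma IsProxPt.sub_mem_esubdiff (hconv : EConvex f) (hb : ∀ y, f y ≠ ⊥) {z x : H}
    (h : IsProxPt f z x) (hx : f x ≠ ⊤) : z - x ∈ esubdiff f x := by
  obtain ⟨r, hr⟩ : ∃ r : ℝ, f x = r := ⟨_, (EReal.coe_toReal hx (hb x)).symm⟩
  intro y
  obtain hy | hy := eq_or_ne (f y) ⊤
  · simp [hy]
  obtain ⟨s, hs⟩ : ∃ s : ℝ, f y = s := ⟨_, (EReal.coe_toReal hy (hb y)).symm⟩
  rw [hr, hs, ← EReal.coe_add, EReal.coe_le_coe_iff]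
  -- compare `x` with the points `x + t • (y - x)` of the segment and let `t → 0⁺`
  refine le_of_forall_le_add_mul (e := 1 / 2 * ‖y - x‖ ^ 2) fun t ht0 ht1 => ?_
  have hcv : f ((1 - t) • x + t • y) ≤ (((1 - t) * r + t * s : ℝ) : EReal) := by
    have := hconv x y (1 - t) t (by linarith) ht0.le (by ring)
    rwa [hr, hs] at this
  have hp := (h ((1 - t) • x + t • y)).trans (add_le_add_left hcv _)
  rw [hr] at hp
  norm_cast at hp
  rw [show (1 - t) • x + t • y - z = (x - z) + t • (y - x) by module, norm_add_sq_real,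
    inner_smul_right, norm_smul, Real.norm_eq_abs, mul_pow, sq_abs] at hp
  rw [show z - x = -(x - z) by abel, inner_neg_right, real_inner_comm]
  refine le_of_mul_le_mul_left ?_ ht0
  nlinarith

lemma IsProxPt.unique (hf : EProper f) (hconv : EConvex f) {z p q : H} (hp : IsProxPt f z p)
    (hq : IsProxPt f z q) : p = q := by
  have hp_top := hp.ne_top hf.1
  have hq_top := hq.ne_top hf.1
  have hmono := inner_sub_nonneg_of_mem_esubdiff hf.2 hp_top hq_top
    (hp.sub_mem_esubdiff hconv hf.2 hp_top) (hq.sub_mem_esubdiff hconv hf.2 hq_top)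
  rw [show z - p - (z - q) = -(p - q) by abel, inner_neg_right, real_inner_self_eq_norm_sq,
    neg_nonneg] at hmono
  exact sub_eq_zero.1 (norm_eq_zero.1 (pow_eq_zero_iff two_ne_zero |>.1
    (le_antisymm hmono (sq_nonneg _))))

lemma eq_iff_sub_mem_esubdiff_of_isProxPt (hf : EProper f) (hconv : EConvex f)
    {prox : H → H} (hprox : ∀ z, IsProxPt f z (prox z)) {z x : H} :
    prox z = x ↔ z - x ∈ esubdiff f x := by
  constructor
  · rintro rfl
    exact (hprox z).sub_mem_esubdiff hconv hf.2 ((hprox z).ne_top hf.1)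
  · exact fun h => (hprox z).unique hf hconv (isProxPt_of_sub_mem_esubdiff h)

end ConvexAnalysis

section LinearlyConstrained

variable {X K : Type*} [NormedAddCommGroup X] [InnerProductSpace ℝ X] [CompleteSpace X]
  [NormedAddCommGroup K] [InnerProductSpace ℝ K] [CompleteSpace K]
  {f : X → EReal} {A : X →L[ℝ] K}

def IsKKTPair (f : X → EReal) (A : X →L[ℝ] K) (x : X) (ν : K) : Prop :=
  A x = 0 ∧ A.adjoint ν ∈ esubdiff f x

lemma inner_adjoint_eq_zero {x : X} (hx : A x = 0) (ν : K) : ⟪x, A.adjoint ν⟫_ℝ = 0 := by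
  rw [ContinuousLinearMap.adjoint_inner_right, hx, inner_zero_left]

lemma IsKKTPair.mem_argminSet (hf : EProper f) {x : X} {ν : K} (h : IsKKTPair f A x ν) :
    x ∈ argminSet (fun x => f x + eind ({0} : Set K) (A x)) ∧
      ν ∈ argminSet (fun ν => econj f (A.adjoint ν)) := by
  obtain ⟨hAx, hsub⟩ := h
  obtain ⟨r, hr⟩ : ∃ r : ℝ, f x = r :=
    ⟨_, (EReal.coe_toReal (ne_top_of_mem_esubdiff hsub hf.1) (hf.2 x)).symm⟩
  have hconj : econj f (A.adjoint ν) = -f x := by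
    refine le_antisymm ?_ ?_
    · refine ((mem_esubdiff_iff_econj_le hr).1 hsub).trans_eq ?_
      rw [inner_adjoint_eq_zero hAx, hr]
      simp
    · simpa [inner_adjoint_eq_zero hAx] using inner_sub_le_econj f x (A.adjoint ν)
  refine ⟨fun y => ?_, fun ν' => ?_⟩
  · by_cases hAy : A y = 0
    · have := inner_sub_le_econj f y (A.adjoint ν)
      simpa [hAx, hAy, eind, hconj, inner_adjoint_eq_zero hAy] using this
    · simp [eind, hAy, EReal.add_top_of_ne_bot (hf.2 y)]
  · simpa [hconj, inner_adjoint_eq_zero hAx] using inner_sub_le_econj f x (A.adjoint ν')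

lemma IsKKTPair.of_mem_argminSet (hf : EProper f)
    (hgap : (⨅ x : X, (f x + eind ({0} : Set K) (A x))) = - ⨅ ν : K, econj f (A.adjoint ν))
    {x : X} {ν : K} (hx : x ∈ argminSet (fun x => f x + eind ({0} : Set K) (A x)))
    (hν : ν ∈ argminSet (fun ν => econj f (A.adjoint ν))) : IsKKTPair f A x ν := by
  rw [le_antisymm (iInf_le _ x) (le_iInf fun y => hx y),
    le_antisymm (iInf_le _ ν) (le_iInf fun ν' => hν ν')] at hgap
  have hfin : f x + eind ({0} : Set K) (A x) ≠ ⊤ := by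
    rw [hgap, Ne, EReal.neg_eq_top_iff]
    exact econj_ne_bot hf.1 _
  have hAx : A x = 0 := by
    by_contra hAx
    simp [eind, hAx, EReal.add_top_of_ne_bot (hf.2 x)] at hfin
  simp only [eind, hAx, Set.mem_singleton_iff, if_true, add_zero] at hgap hfin
  obtain ⟨r, hr⟩ : ∃ r : ℝ, f x = r := ⟨_, (EReal.coe_toReal hfin (hf.2 x)).symm⟩
  refine ⟨hAx, (mem_esubdiff_iff_econj_le hr).2 ?_⟩
  rw [inner_adjoint_eq_zero hAx, zero_sub, EReal.coe_neg, ← hr, hgap, neg_neg]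

lemma lal_fixedPoint_iff (hf : EProper f) (hconv : EConvex f) {prox : X → X}
    (hprox : ∀ z, IsProxPt f z (prox z)) (x : X) (ν : K) :
    (prox (x - A.adjoint (A x) + A.adjoint ν),
        ν - A (prox (x - A.adjoint (A x) + A.adjoint ν))) = (x, ν) ↔ IsKKTPair f A x ν := by
  rw [Prod.mk.injEq, sub_eq_self, eq_iff_sub_mem_esubdiff_of_isProxPt hf hconv hprox]
  constructor
  · rintro ⟨hsub, hAx⟩
    rw [(eq_iff_sub_mem_esubdiff_of_isProxPt hf hconv hprox).2 hsub] at hAx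
    exact ⟨hAx, by simpa [hAx] using hsub⟩
  · rintro ⟨hAx, hsub⟩
    have hsub' : x - A.adjoint (A x) + A.adjoint ν - x ∈ esubdiff f x := by
      simpa [hAx] using hsub
    rw [(eq_iff_sub_mem_esubdiff_of_isProxPt hf hconv hprox).2 hsub']
    exact ⟨hsub', hAx⟩

end LinearlyConstrained

theorem statement1_general
    {X K : Type*} [NormedAddCommGroup X] [InnerProductSpace ℝ X] [CompleteSpace X]
    [NormedAddCommGroup K] [InnerProductSpace ℝ K] [CompleteSpace K]
    (f : X → EReal) (hf : Gamma0 f) (A : X →L[ℝ] K)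
    (SpLAL : Set X) (hSpdef : SpLAL = argminSet (fun x => f x + eind ({0} : Set K) (A x)))
    (SdLAL : Set K) (hSddef : SdLAL = argminSet (fun ν => econj f (A.adjoint ν)))
    (hminmin : (⨅ x : X, (f x + eind ({0} : Set K) (A x)))
      = - ⨅ ν : K, econj f (A.adjoint ν))
    (proxf : X → X) (hproxf : ∀ x, IsProxPt f x (proxf x))
    (T : X × K → X × K)
    (hT : ∀ w : X × K, T w =
      (proxf (w.1 - A.adjoint (A w.1) + A.adjoint w.2),
       w.2 - A (proxf (w.1 - A.adjoint (A w.1) + A.adjoint w.2)))) :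
    {w : X × K | T w = w} = SpLAL ×ˢ SdLAL := by
  obtain ⟨hproper, -, hconv⟩ := hf
  ext ⟨x, ν⟩
  rw [Set.mem_ofPred_eq, hT, lal_fixedPoint_iff hproper hconv hproxf, Set.mem_prod, hSpdef, hSddef]
  exact ⟨fun h => h.mem_argminSet hproper,
    fun h => IsKKTPair.of_mem_argminSet hproper hminmin h.1 h.2⟩

/-- Proposition 2(a): fixed point set of the LAL operator.
Under primal/dual attainment and zero duality gap for the problem
`minimize f(x) subject to Ax = 0`, the fixed point set of the LAL operator
`T_LAL(x,ν) = (prox_f(x - A*Ax + A*ν), ν - A x_T)` is `S_pLAL × S_dLAL`. -/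
theorem statement1
    {X K : Type*} [NormedAddCommGroup X] [InnerProductSpace ℝ X] [CompleteSpace X]
    [NormedAddCommGroup K] [InnerProductSpace ℝ K] [CompleteSpace K]
    (f : X → EReal) (hf : Gamma0 f) (A : X →L[ℝ] K)
    (SpLAL : Set X) (hSpdef : SpLAL = argminSet (fun x => f x + eind ({0} : Set K) (A x)))
    (SdLAL : Set K) (hSddef : SdLAL = argminSet (fun ν => econj f (A.adjoint ν)))
    (hSp : SpLAL.Nonempty) (hSd : SdLAL.Nonempty)
    (hminmin : (⨅ x : X, (f x + eind ({0} : Set K) (A x)))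
      = - ⨅ ν : K, econj f (A.adjoint ν))
    (proxf : X → X) (hproxf : ∀ x, IsProxPt f x (proxf x))
    (T : X × K → X × K)
    (hT : ∀ w : X × K, T w =
      (proxf (w.1 - A.adjoint (A w.1) + A.adjoint w.2),
       w.2 - A (proxf (w.1 - A.adjoint (A w.1) + A.adjoint w.2)))) :
    {w : X × K | T w = w} = SpLAL ×ˢ SdLAL :=
  statement1_general f hf A SpLAL hSpdef SdLAL hSddef hminmin proxf hproxf T hT
end
end

section
/- Let X be a real Hilbert space and K = ℝ^m. Let f ∈ Γ₀(X), g = ⊕_{i=1}^m g_i with g_i ∈ Γ₀(ℝ), and A : X → ℝ^m : x ↦ (A₁x, …, A_mx) with nonzero bounded linear functionals A_i : X → ℝ. Assume S_p := argmin_{x∈X}(f(x) + ∑_{i=1}^m g_i(A_i x)) ≠ ∅ and the qualification condition 0 ∈ sri(dom(g) − A(dom(f))) holds. Define H(x^{(1)},…,x^{(m+1)}) := ∑_{i=1}^m g_i(A_i x^{(i)}) + f(x^{(m+1)}), D := {(x^{(1)},…,x^{(m+1)}) ∈ X^{m+1} : x^{(i)} = x^{(j)} for all i,j} with orthogonal projection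 P_D, and T_DRSII := (2 prox_H − I) ∘ (2 P_D − I) on X^{m+1}. Then S_p = {(1/(m+1)) ∑_{i=1}^{m+1} x^{(i)} : (x^{(1)},…,x^{(m+1)}) ∈ Fix(T_DRSII)}, i.e., S_p equals the image of Fix(T_DRSII) under the map taking the first component of P_D. -/
noncomputable section

open Filter Topology Bornology
open scoped InnerProductSpace Pointwise Classical

/-!
Write `H Z = ∑ⱼ φⱼ (Zⱼ)` on `X^{m+1}` with `φ = (g₁ ∘ A₁, …, g_m ∘ A_m, f)`. Since
`T = (2 prox_H - I) ∘ (2 P_D - I)`, a point `Z` with mean `Z̄` is fixed by `T` iff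
`prox_H (2 Z̄ - Z) = (Z̄, …, Z̄)`. Then `Z̄ - Z` is a subgradient of `H` at the diagonal point
`(Z̄, …, Z̄)` which is orthogonal to the diagonal, so `Z̄` minimizes `H` along the diagonal,
that is, `Z̄` minimizes `f + ∑ᵢ gᵢ ∘ Aᵢ`.

Conversely, at a minimizer `x` the qualification condition gives, through a hyperplane supporting
the epigraph of the perturbation function (M. Riesz extension), subgradients `dⱼ ∈ ∂φⱼ(x)` with
`∑ⱼ dⱼ = 0`. Then `(x, …, x)` is the proximal point of `H` at `x + d`, and `x - d` is a fixed point
of `T` with mean `x`.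
-/

namespace EReal

lemma coe_finset_sum {ι : Type*} (s : Finset ι) (f : ι → ℝ) :
    ((∑ i ∈ s, f i : ℝ) : EReal) = ∑ i ∈ s, (f i : EReal) := by
  induction s using Finset.cons_induction with
  | empty => simp
  | cons a s ha ih => rw [Finset.sum_cons, Finset.sum_cons, coe_add, ih]

lemma finset_sum_ne_bot {ι : Type*} {s : Finset ι} {f : ι → EReal} (h : ∀ i ∈ s, f i ≠ ⊥) :
    ∑ i ∈ s, f i ≠ ⊥ := by
  induction s using Finset.cons_induction with
  | empty => simp
  | cons a s ha ih =>
    rw [Finset.sum_cons]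
    exact add_ne_bot_iff.mpr ⟨h a (Finset.mem_cons_self a s),
      ih fun i hi => h i (Finset.mem_cons_of_mem hi)⟩

end EReal

section EConvex

variable {E F : Type*} [AddCommGroup E] [Module ℝ E] [AddCommGroup F] [Module ℝ F]

lemma EConvex.le_coe_of_eq_coe {φ : E → EReal} (hφ : EConvex φ) {x y : E} {u v a b : ℝ}
    (hx : φ x = u) (hy : φ y = v) (ha : 0 ≤ a) (hb : 0 ≤ b) (hab : a + b = 1) :
    φ (a • x + b • y) ≤ ((a * u + b * v : ℝ) : EReal) := by
  simpa only [hx, hy, EReal.coe_add, EReal.coe_mul] using hφ x y a b ha hb hab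

lemma EConvex.comp_linearMap {φ : F → EReal} (hφ : EConvex φ) (L : E →ₗ[ℝ] F) :
    EConvex (φ ∘ L) := fun x y a b ha hb hab => by
  simpa only [Function.comp_apply, map_add, map_smul] using hφ (L x) (L y) a b ha hb hab

lemma EConvex.add {φ ψ : E → EReal} (hφ : EConvex φ) (hψ : EConvex ψ) : EConvex (φ + ψ) := by
  intro x y a b ha hb hab
  have distrib : ∀ c : ℝ, 0 ≤ c → ∀ s t : EReal, (c : EReal) * (s + t) = c * s + c * t :=
    fun c hc => EReal.left_distrib_of_nonneg_of_ne_top (EReal.coe_nonneg.mpr hc)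
      (EReal.coe_ne_top c)
  calc (φ + ψ) (a • x + b • y)
      ≤ (a * φ x + b * φ y) + (a * ψ x + b * ψ y) :=
        add_le_add (hφ x y a b ha hb hab) (hψ x y a b ha hb hab)
    _ = a * (φ + ψ) x + b * (φ + ψ) y := by
        rw [Pi.add_apply, Pi.add_apply, distrib a ha, distrib b hb, add_add_add_comm]

lemma EConvex.sum {ι : Type*} (s : Finset ι) {φ : ι → E → EReal} (hφ : ∀ i ∈ s, EConvex (φ i)) :
    EConvex (fun x => ∑ i ∈ s, φ i x) := by
  induction s using Finset.cons_induction with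
  | empty => intro x y a b _ _ _; simp
  | cons j s hj ih =>
    simp only [Finset.sum_cons]
    exact (hφ j (Finset.mem_cons_self j s)).add (ih fun i hi => hφ i (Finset.mem_cons_of_mem hi))

lemma EConvex.piLp_sum {ι : Type*} [Fintype ι] {φ : ι → E → EReal} (hφ : ∀ i, EConvex (φ i)) :
    EConvex (fun Z : PiLp 2 (fun _ : ι => E) => ∑ i, φ i (Z i)) :=
  EConvex.sum _ fun i _ Z W a b ha hb hab => hφ i (Z i) (W i) a b ha hb hab

end EConvex

section Subdifferential

variable {E : Type*} [NormedAddCommGroup E] [InnerProductSpace ℝ E]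

lemma ContinuousLinearMap.adjoint_mem_esubdiff_comp {F : Type*} [NormedAddCommGroup F]
    [InnerProductSpace ℝ F] [CompleteSpace E] [CompleteSpace F] {g : F → EReal} (L : E →L[ℝ] F)
    {x : E} {u : F} (hu : u ∈ esubdiff g (L x)) :
    ContinuousLinearMap.adjoint L u ∈ esubdiff (fun z => g (L z)) x := fun z => by
  rw [ContinuousLinearMap.adjoint_inner_right, map_sub]
  exact hu (L z)

lemma toLp_mem_esubdiff_sum {ι : Type*} [Fintype ι] {φ : ι → E → EReal} {x u : ι → E}
    (h : ∀ i, u i ∈ esubdiff (φ i) (x i)) :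
    WithLp.toLp 2 u ∈ esubdiff (fun Z : PiLp 2 (fun _ : ι => E) => ∑ i, φ i (Z i))
      (WithLp.toLp 2 x) := fun Z => by
  simp only [PiLp.inner_apply, PiLp.sub_apply, EReal.coe_finset_sum,
    ← Finset.sum_add_distrib]
  exact Finset.sum_le_sum fun i _ => h i (Z i)

lemma mem_esubdiff_apply_single_of_le_sum {ι : Type*} [Fintype ι] [DecidableEq ι]
    {g : ι → ℝ → EReal} (hbot : ∀ i t, g i t ≠ ⊥) {y : ι → ℝ} (hfin : ∑ i, g i (y i) ≠ ⊤)
    {ℓ : (ι → ℝ) →ₗ[ℝ] ℝ} (hℓ : ∀ w, ∑ i, g i (y i) + ℓ (w - y) ≤ ∑ i, g i (w i)) (i : ι) :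
    ℓ (Pi.single i 1) ∈ esubdiff (g i) (y i) := by
  intro z
  have h := hℓ (Function.update y i z)
  have hdiff : Function.update y i z - y = (z - y i) • Pi.single i 1 := by
    ext j; by_cases hj : j = i <;> simp [hj]
  have hupdate : ∑ j, g j (Function.update y i z j) =
      ∑ j, Function.update (fun j => g j (y j)) i (g i z) j :=
    Finset.sum_congr rfl fun j _ => Function.apply_update (fun j => g j) y i z j
  rw [hdiff, map_smul, smul_eq_mul, hupdate, Finset.sum_update_of_mem (Finset.mem_univ i),
    Finset.sum_eq_add_sum_sdiff_singleton_of_mem (Finset.mem_univ i) (fun j => g j (y j))] at h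
  rw [Finset.sum_eq_add_sum_sdiff_singleton_of_mem (Finset.mem_univ i) (fun j => g j (y j))] at hfin
  have hrest := ((EReal.add_ne_top_iff_ne_top₂ (hbot i _)
    (EReal.finset_sum_ne_bot fun j _ => hbot j _)).mp hfin).2
  lift ∑ j ∈ Finset.univ \ {i}, g j (y j) to ℝ
    using ⟨hrest, EReal.finset_sum_ne_bot fun j _ => hbot j _⟩ with r
  rw [add_right_comm, (EReal.addLECancellable_coe r).add_le_add_iff_right, add_comm] at h
  rwa [Real.inner_apply]

lemma IsProxPt.sub_mem_esubdiff_s8 {φ : E → EReal} (hconv : EConvex φ) (hbot : ∀ x, φ x ≠ ⊥)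
    {y p : E} (h : IsProxPt φ y p) : y - p ∈ esubdiff φ p := by
  intro w
  rcases eq_or_ne (φ w) ⊤ with hw | hw
  · rw [hw]; exact le_top
  have hp : φ p ≠ ⊤ := fun hp => by
    have := h w
    rw [hp, EReal.top_add_coe, top_le_iff] at this
    exact EReal.add_ne_top hw (EReal.coe_ne_top _) this
  lift φ p to ℝ using ⟨hp, hbot p⟩ with a ha
  lift φ w to ℝ using ⟨hw, hbot w⟩ with b hb
  rw [← EReal.coe_add, EReal.coe_le_coe_iff]
  -- compare `p` with the points `p + t • (w - p)` of the segment, then let `t → 0`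
  have key : ∀ t : ℝ, 0 < t → t ≤ 1 → ⟪w - p, y - p⟫_ℝ + a ≤ b + t * (‖w - p‖ ^ 2 / 2) := by
    intro t ht ht1
    have hconvt := hconv.le_coe_of_eq_coe ha.symm hb.symm (sub_nonneg.mpr ht1) ht.le (by ring)
    have hprox := (h ((1 - t) • p + t • w)).trans (add_le_add_left hconvt _)
    rw [← ha, ← EReal.coe_add, ← EReal.coe_add, EReal.coe_le_coe_iff] at hprox
    have hseg : (1 - t) • p + t • w - y = (p - y) + t • (w - p) := by module
    rw [hseg, norm_add_sq_real, norm_smul, real_inner_smul_right, Real.norm_eq_abs,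
      abs_of_pos ht] at hprox
    have hinner : ⟪w - p, y - p⟫_ℝ = -⟪p - y, w - p⟫_ℝ := by
      rw [real_inner_comm, ← inner_neg_left, neg_sub]
    rw [hinner]
    nlinarith
  have hlim : Tendsto (fun t : ℝ => b + t * (‖w - p‖ ^ 2 / 2)) (𝓝[>] 0) (𝓝 b) :=
    tendsto_nhdsWithin_of_tendsto_nhds <|
      (by fun_prop : Continuous fun t : ℝ => b + t * (‖w - p‖ ^ 2 / 2)).tendsto' 0 b (by simp)
  exact ge_of_tendsto hlim (mem_of_superset (Ioc_mem_nhdsGT one_pos) fun t ht => key t ht.1 ht.2)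

lemma IsProxPt.eq_of_sub_mem_esubdiff {φ : E → EReal} (hbot : ∀ x, φ x ≠ ⊥) {y p q : E}
    (hq : IsProxPt φ y q) (hp : y - p ∈ esubdiff φ p) (hfin : φ p ≠ ⊤) : q = p := by
  have hsub := hp q
  have hprox := hq p
  lift φ p to ℝ using ⟨hfin, hbot p⟩ with a ha
  have hq_top : φ q ≠ ⊤ := fun htop => by
    rw [htop, EReal.top_add_coe, top_le_iff, ← EReal.coe_add] at hprox
    exact EReal.coe_ne_top _ hprox
  lift φ q to ℝ using ⟨hq_top, hbot q⟩ with b hb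
  rw [← EReal.coe_add, EReal.coe_le_coe_iff] at hsub
  rw [← EReal.coe_add, ← EReal.coe_add, EReal.coe_le_coe_iff] at hprox
  have hexp : q - y = (q - p) - (y - p) := by abel
  rw [hexp, norm_sub_sq_real, ← norm_neg (p - y), neg_sub] at hprox
  have : ‖q - p‖ ^ 2 ≤ 0 := by nlinarith
  exact sub_eq_zero.mp (norm_eq_zero.mp (pow_eq_zero_iff two_ne_zero |>.mp
    (le_antisymm this (sq_nonneg _))))

lemma le_of_isProxPt_toLp_const {ι : Type*} [Fintype ι] {Φ : PiLp 2 (fun _ : ι => E) → EReal}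
    (hconv : EConvex Φ) (hbot : ∀ Z, Φ Z ≠ ⊥) {Y : ι → E} {c : E}
    (hprox : IsProxPt Φ (WithLp.toLp 2 Y) (WithLp.toLp 2 fun _ => c)) (hY : ∑ i, (Y i - c) = 0)
    (x : E) : Φ (WithLp.toLp 2 fun _ => c) ≤ Φ (WithLp.toLp 2 fun _ => x) := by
  simpa [PiLp.inner_apply, ← inner_sum, hY] using
    hprox.sub_mem_esubdiff_s8 hconv hbot (WithLp.toLp 2 fun _ => x)

end Subdifferential

lemma two_smul_sub_sub_eq_self_iff {V : Type*} [AddCommGroup V] [Module ℝ V] {p c z : V} :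
    (2 : ℝ) • p - ((2 : ℝ) • c - z) = z ↔ p = c := by
  refine ⟨fun h => ?_, fun h => h ▸ sub_sub_cancel _ _⟩
  have : (2 : ℝ) • (p - c) = 0 := by linear_combination (norm := module) h
  exact sub_eq_zero.mp ((smul_eq_zero.mp this).resolve_left two_ne_zero)

lemma inv_succ_smul_sum_eq_iff {V : Type*} [AddCommGroup V] [Module ℝ V] {n : ℕ}
    (Z : Fin (n + 1) → V) (c : V) : ((n : ℝ) + 1)⁻¹ • ∑ i, Z i = c ↔ ∑ i, (Z i - c) = 0 := by
  rw [inv_smul_eq_iff₀ (by positivity), Finset.sum_sub_distrib, Finset.sum_const, Finset.card_univ,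
    Fintype.card_fin, sub_eq_zero, ← Nat.cast_smul_eq_nsmul ℝ]
  push_cast
  rfl

section DouglasRachford

variable {E : Type*} [NormedAddCommGroup E] [InnerProductSpace ℝ E] {n : ℕ}
  {Φ : PiLp 2 (fun _ : Fin (n + 1) => E) → EReal} {P : (Fin (n + 1) → E) → Fin (n + 1) → E}

lemma mean_mem_argminSet_of_fixedPoint (hconv : EConvex Φ) (hbot : ∀ Z, Φ Z ≠ ⊥)
    (hP : ∀ Z, IsProxPt Φ (WithLp.toLp 2 Z) (WithLp.toLp 2 (P Z))) {Z : Fin (n + 1) → E}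
    (hZ : (2 : ℝ) • P (fun i => (2 : ℝ) • (((n : ℝ) + 1)⁻¹ • ∑ j, Z j) - Z i)
      - (fun i => (2 : ℝ) • (((n : ℝ) + 1)⁻¹ • ∑ j, Z j) - Z i) = Z) :
    ((n : ℝ) + 1)⁻¹ • ∑ j, Z j ∈ argminSet (fun x => Φ (WithLp.toLp 2 fun _ => x)) := by
  have hPY := two_smul_sub_sub_eq_self_iff.mp hZ
  refine le_of_isProxPt_toLp_const hconv hbot (hPY ▸ hP _) ?_
  rw [← neg_eq_zero, ← (inv_succ_smul_sum_eq_iff Z _).mp rfl, ← Finset.sum_neg_distrib]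
  congr 1 with i
  module

lemma exists_fixedPoint_of_mem_esubdiff (hbot : ∀ Z, Φ Z ≠ ⊥)
    (hP : ∀ Z, IsProxPt Φ (WithLp.toLp 2 Z) (WithLp.toLp 2 (P Z))) {x : E}
    {d : Fin (n + 1) → E} (hd0 : ∑ j, d j = 0)
    (hd : WithLp.toLp 2 d ∈ esubdiff Φ (WithLp.toLp 2 fun _ => x))
    (hfin : Φ (WithLp.toLp 2 fun _ => x) ≠ ⊤) :
    ∃ Z : Fin (n + 1) → E,
      (2 : ℝ) • P (fun i => (2 : ℝ) • (((n : ℝ) + 1)⁻¹ • ∑ j, Z j) - Z i)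
        - (fun i => (2 : ℝ) • (((n : ℝ) + 1)⁻¹ • ∑ j, Z j) - Z i) = Z ∧
      ((n : ℝ) + 1)⁻¹ • ∑ j, Z j = x := by
  have hmean : ((n : ℝ) + 1)⁻¹ • ∑ j, (x - d j) = x :=
    (inv_succ_smul_sum_eq_iff _ _).mpr (by simp [hd0])
  refine ⟨fun j => x - d j, ?_, hmean⟩
  rw [hmean]
  refine two_smul_sub_sub_eq_self_iff.mpr
    (WithLp.toLp_injective 2 ((hP _).eq_of_sub_mem_esubdiff hbot ?_ hfin))
  convert hd using 1
  ext j
  simp only [PiLp.sub_apply]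
  module

end DouglasRachford


lemma exists_pos_smul_mem_of_zero_mem_sriSet {K : Type*} [NormedAddCommGroup K]
    [NormedSpace ℝ K] [FiniteDimensional ℝ K] {C : Set K} (hC : (0 : K) ∈ sriSet C) {v : K}
    (hv : v ∈ Submodule.span ℝ C) : ∃ t : ℝ, 0 < t ∧ t • v ∈ C := by
  have hcone := hC.2
  simp only [sub_zero, Set.image_id'] at hcone
  rw [(Submodule.closed_of_finiteDimensional _).closure_eq] at hcone
  obtain ⟨t, ht, c, hc, rfl⟩ : v ∈ {y | ∃ t : ℝ, 0 < t ∧ ∃ c ∈ C, y = t • c} := hcone ▸ hv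
  exact ⟨t⁻¹, inv_pos.mpr ht, by rwa [inv_smul_smul₀ ht.ne']⟩

lemma exists_linearMap_le_of_convex_of_absorbing {V : Type*} [AddCommGroup V] [Module ℝ V]
    {D : Set (V × ℝ)} (hD : Convex ℝ D) (h0 : (0 : V × ℝ) ∈ D)
    (hvert : ∀ ρ : ℝ, ((0 : V), ρ) ∈ D → 0 ≤ ρ)
    (habs : ∀ v : V, ∃ t : ℝ, 0 < t ∧ ∃ ρ : ℝ, (t • v, ρ) ∈ D) :
    ∃ ℓ : V →ₗ[ℝ] ℝ, ∀ p ∈ D, ℓ p.1 ≤ p.2 := by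
  -- M. Riesz: extend `(0, ρ) ↦ ρ` to a functional that is nonnegative on the cone over `D`.
  let s : PointedCone ℝ (V × ℝ) :=
    (ConvexCone.hull ℝ D).toPointedCone (ConvexCone.subset_hull h0)
  have mem_s : ∀ p, p ∈ s ↔ ∃ r : ℝ, 0 < r ∧ p ∈ r • D := fun p =>
    (ConvexCone.mem_toPointedCone _ p).trans (ConvexCone.mem_hull_of_convex hD)
  let f : (V × ℝ) →ₗ.[ℝ] ℝ :=
    ⟨LinearMap.range (LinearMap.inr ℝ V ℝ), (LinearMap.snd ℝ V ℝ).comp (Submodule.subtype _)⟩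
  have nonneg : ∀ x : f.domain, (x : V × ℝ) ∈ s → 0 ≤ f x := by
    rintro ⟨_, ρ, rfl⟩ hρ
    obtain ⟨r, hr, q, hq, hqρ⟩ := (mem_s _).mp hρ
    have hq' : q = (0, ρ / r) := by
      rw [← inv_smul_smul₀ hr.ne' q]
      simp only [LinearMap.inr_apply] at hqρ
      rw [hqρ]
      ext <;> simp [div_eq_inv_mul]
    have := hvert _ (hq' ▸ hq)
    simp only [f, LinearPMap.mk_apply, LinearMap.comp_apply, Submodule.subtype_apply,
      LinearMap.inr_apply, LinearMap.snd_apply]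
    simpa using (le_div_iff₀ hr).mp this
  have dense : ∀ p, ∃ x : f.domain, (x : V × ℝ) + p ∈ s := by
    rintro ⟨v, σ⟩
    obtain ⟨t, ht, ρ, hρ⟩ := habs v
    refine ⟨⟨(0, ρ / t - σ), ρ / t - σ, rfl⟩, (mem_s _).mpr ⟨t⁻¹, inv_pos.mpr ht, _, hρ, ?_⟩⟩
    ext <;> simp [ht.ne', div_eq_inv_mul]
  obtain ⟨g, hgf, hgs⟩ := riesz_extension s f nonneg dense
  have hg_vert : ∀ ρ : ℝ, g (0, ρ) = ρ := fun ρ => hgf ⟨(0, ρ), ρ, rfl⟩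
  refine ⟨-(g.comp (LinearMap.inl ℝ V ℝ)), fun p hp => ?_⟩
  have hsplit : g p = g (p.1, 0) + p.2 := by
    rw [← hg_vert p.2, ← map_add, Prod.mk_add_mk, add_zero, zero_add]
  have := hgs p ((mem_s p).mpr ⟨1, one_pos, by rwa [one_smul]⟩)
  simp only [LinearMap.neg_apply, LinearMap.comp_apply, LinearMap.inl_apply]
  linarith

lemma exists_linearMap_le_of_convex_of_absorbing_span {K : Type*} [AddCommGroup K] [Module ℝ K]
    {D : Set (K × ℝ)} (hD : Convex ℝ D) (h0 : (0 : K × ℝ) ∈ D)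
    (hvert : ∀ ρ : ℝ, ((0 : K), ρ) ∈ D → 0 ≤ ρ)
    (habs : ∀ v ∈ Submodule.span ℝ (Prod.fst '' D), ∃ t : ℝ, 0 < t ∧ t • v ∈ Prod.fst '' D) :
    ∃ ℓ : K →ₗ[ℝ] ℝ, ∀ p ∈ D, ℓ p.1 ≤ p.2 := by
  set V := Submodule.span ℝ (Prod.fst '' D)
  have hfst : ∀ p ∈ D, p.1 ∈ V := fun p hp => Submodule.subset_span ⟨p, hp, rfl⟩
  obtain ⟨ℓV, hℓV⟩ := exists_linearMap_le_of_convex_of_absorbing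
    (D := V.subtype.prodMap LinearMap.id ⁻¹' D) (hD.linear_preimage _)
    (by rwa [Set.mem_preimage, map_zero])
    (fun ρ hρ => hvert ρ (by simpa using hρ)) fun v => by
      obtain ⟨t, ht, ⟨q, ρ⟩, hq, hqv⟩ := habs v v.2
      exact ⟨t, ht, ρ, by simpa [← hqv] using hq⟩
  obtain ⟨ℓ, hℓ⟩ := LinearMap.exists_extend ℓV
  refine ⟨ℓ, fun p hp => ?_⟩
  have := hℓV (⟨p.1, hfst p hp⟩, p.2) (by simpa using hp)
  rwa [← hℓ] at this

section Perturbation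

variable {X K : Type*} [AddCommGroup X] [Module ℝ X] [AddCommGroup K] [Module ℝ K]

/-- The epigraph, shifted down by `μ`, of the perturbation function
`y ↦ inf_x (f x + G (L x + y))` of the problem `min_x f x + G (L x)`. -/
def perturbEpigraph (f : X → EReal) (G : K → EReal) (L : X →ₗ[ℝ] K) (μ : ℝ) : Set (K × ℝ) :=
  {p | ∃ x, f x + G (L x + p.1) ≤ ((μ + p.2 : ℝ) : EReal)}

lemma convex_perturbEpigraph {f : X → EReal} {G : K → EReal} (hf : EConvex f) (hG : EConvex G)
    (L : X →ₗ[ℝ] K) (μ : ℝ) : Convex ℝ (perturbEpigraph f G L μ) := by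
  have hΦ : EConvex (fun q : X × K => f q.1 + G (L q.1 + q.2)) :=
    (hf.comp_linearMap (LinearMap.fst ℝ X K)).add
      (hG.comp_linearMap ((L.comp (LinearMap.fst ℝ X K)) + LinearMap.snd ℝ X K))
  rintro ⟨y₁, ρ₁⟩ ⟨x₁, h₁⟩ ⟨y₂, ρ₂⟩ ⟨x₂, h₂⟩ a b ha hb hab
  refine ⟨a • x₁ + b • x₂, ?_⟩
  have hcomb := hΦ (x₁, y₁) (x₂, y₂) a b ha hb hab
  simp only [Prod.smul_mk, Prod.mk_add_mk] at hcomb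
  refine hcomb.trans ((add_le_add (mul_le_mul_of_nonneg_left h₁ (EReal.coe_nonneg.mpr ha))
    (mul_le_mul_of_nonneg_left h₂ (EReal.coe_nonneg.mpr hb))).trans_eq ?_)
  simp only [Prod.smul_mk, Prod.mk_add_mk, smul_eq_mul]
  norm_cast
  linear_combination μ * hab

lemma fst_image_perturbEpigraph {f : X → EReal} {G : K → EReal} (hfbot : ∀ x, f x ≠ ⊥)
    (hGbot : ∀ y, G y ≠ ⊥) (L : X →ₗ[ℝ] K) (μ : ℝ) :
    Prod.fst '' perturbEpigraph f G L μ = edom G - L '' edom f := by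
  ext y
  constructor
  · rintro ⟨⟨y, ρ⟩, ⟨x, hx⟩, rfl⟩
    have hfin := ne_top_of_le_ne_top (EReal.coe_ne_top _) hx
    rw [EReal.add_ne_top_iff_ne_top₂ (hfbot x) (hGbot _)] at hfin
    exact ⟨L x + y, hfin.2, L x, ⟨x, hfin.1, rfl⟩, add_sub_cancel_left _ _⟩
  · rintro ⟨u, hu, _, ⟨x, hx, rfl⟩, rfl⟩
    have hfin : f x + G u ≠ ⊤ := EReal.add_ne_top hx hu
    lift f x + G u to ℝ using ⟨hfin, EReal.add_ne_bot_iff.mpr ⟨hfbot x, hGbot u⟩⟩ with r hr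
    refine ⟨(u - L x, r - μ), ⟨x, ?_⟩, rfl⟩
    rw [add_sub_cancel, ← hr, add_sub_cancel]

end Perturbation

/-- `ℓ` is read off a hyperplane supporting `perturbEpigraph` at the origin; the qualification
condition makes the domain of the perturbation function absorbing in its span, which keeps this
hyperplane nonvertical. -/
theorem exists_linearMap_subgradients_of_mem_argminSet {X K : Type*} [AddCommGroup X]
    [Module ℝ X] [NormedAddCommGroup K] [NormedSpace ℝ K] [FiniteDimensional ℝ K]
    {f : X → EReal} {G : K → EReal} {L : X →ₗ[ℝ] K} (hf : EConvex f) (hG : EConvex G)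
    (hfbot : ∀ x, f x ≠ ⊥) (hGbot : ∀ y, G y ≠ ⊥)
    (hqc : (0 : K) ∈ sriSet (edom G - L '' edom f)) {x : X}
    (hx : x ∈ argminSet (fun z => f z + G (L z))) (hfin : f x + G (L x) ≠ ⊤) :
    ∃ ℓ : K →ₗ[ℝ] ℝ, (∀ w, G (L x) + ℓ (w - L x) ≤ G w) ∧ ∀ z, f x + ℓ (L x - L z) ≤ f z := by
  obtain ⟨hfx, hGx⟩ := (EReal.add_ne_top_iff_ne_top₂ (hfbot x) (hGbot _)).mp hfin
  have hx' : ∀ z, f x + G (L x) ≤ f z + G (L z) := hx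
  lift f x to ℝ using ⟨hfx, hfbot x⟩ with a ha
  lift G (L x) to ℝ using ⟨hGx, hGbot _⟩ with c hc
  obtain ⟨ℓ, hℓ⟩ := exists_linearMap_le_of_convex_of_absorbing_span
    (convex_perturbEpigraph hf hG L (a + c)) ⟨x, by simp [← ha, ← hc]⟩
    (fun ρ ⟨z, hz⟩ => by
      have := (hx' z).trans (by simpa using hz)
      exact_mod_cast (le_add_iff_nonneg_right _).mp (EReal.coe_le_coe_iff.mp this))
    (by
      rw [fst_image_perturbEpigraph hfbot hGbot]
      exact fun v hv => exists_pos_smul_mem_of_zero_mem_sriSet hqc hv)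
  have key : ∀ z y, (a : EReal) + (c + ℓ y) ≤ f z + G (L z + y) := by
    intro z y
    rcases eq_or_ne (f z + G (L z + y)) ⊤ with htop | htop
    · rw [htop]; exact le_top
    lift f z + G (L z + y) to ℝ using ⟨htop, EReal.add_ne_bot_iff.mpr ⟨hfbot z, hGbot _⟩⟩
      with r hr
    have := hℓ (y, r - (a + c)) ⟨z, by rw [← hr]; simp⟩
    norm_cast
    linarith
  refine ⟨ℓ, fun w => ?_, fun z => ?_⟩
  · have := key x (w - L x)
    rwa [add_sub_cancel, ← ha, (EReal.addLECancellable_coe a).add_le_add_iff_left] at this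
  · have := key z (L x - L z)
    rwa [add_sub_cancel, ← hc, add_left_comm, add_comm (f z),
      (EReal.addLECancellable_coe c).add_le_add_iff_left] at this

lemma exists_add_ne_top_of_zero_mem_sriSet {X K : Type*} [NormedAddCommGroup K] [NormedSpace ℝ K]
    {f : X → EReal} {G : K → EReal} {L : X → K} (h : (0 : K) ∈ sriSet (edom G - L '' edom f)) :
    ∃ x, f x + G (L x) ≠ ⊤ := by
  obtain ⟨u, hu, _, ⟨x, hx, rfl⟩, hux⟩ := h.1
  rw [sub_eq_zero] at hux
  exact ⟨x, EReal.add_ne_top hx (hux ▸ hu)⟩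

theorem exists_sum_eq_zero_mem_esubdiff_of_mem_argminSet {X : Type*} [NormedAddCommGroup X]
    [InnerProductSpace ℝ X] [CompleteSpace X] {m : ℕ} {f : X → EReal} {g : Fin m → ℝ → EReal}
    (hf : EConvex f) (hg : ∀ i, EConvex (g i)) (hfbot : ∀ x, f x ≠ ⊥) (hgbot : ∀ i t, g i t ≠ ⊥)
    (A : Fin m → X →L[ℝ] ℝ)
    (hqc : (0 : Fin m → ℝ) ∈
      sriSet (edom (fun y : Fin m → ℝ => ∑ i, g i (y i)) - (fun x i => A i x) '' edom f))
    {x : X} (hx : x ∈ argminSet (fun z => f z + ∑ i, g i (A i z)))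
    (hfin : f x + ∑ i, g i (A i x) ≠ ⊤) :
    ∃ d : Fin (m + 1) → X, ∑ j, d j = 0 ∧
      ∀ j, d j ∈ esubdiff (Fin.snoc (α := fun _ => X → EReal) (fun i z => g i (A i z)) f j) x := by
  let L : X →ₗ[ℝ] (Fin m → ℝ) := LinearMap.pi fun i => (A i : X →ₗ[ℝ] ℝ)
  obtain ⟨ℓ, hℓg, hℓf⟩ := exists_linearMap_subgradients_of_mem_argminSet (L := L) hf
    (EConvex.sum _ fun i _ y y' a b ha hb hab => hg i (y i) (y' i) a b ha hb hab) hfbot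
    (fun y => EReal.finset_sum_ne_bot fun i _ => hgbot i _) hqc hx hfin
  let u : Fin m → ℝ := fun i => ℓ (Pi.single i 1)
  have hu : ∀ i, u i ∈ esubdiff (g i) (A i x) :=
    mem_esubdiff_apply_single_of_le_sum hgbot
      ((EReal.add_ne_top_iff_ne_top₂ (hfbot x) (EReal.finset_sum_ne_bot fun i _ => hgbot i _)).mp
        hfin).2 hℓg
  have hℓ : ∀ y, ℓ y = ∑ i, y i * u i := fun y => by
    rw [LinearMap.pi_apply_eq_sum_univ ℓ y]
    refine Finset.sum_congr rfl fun i _ => ?_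
    rw [smul_eq_mul]
    congr 2
    ext j
    simp [Pi.single_apply, eq_comm]
  refine ⟨Fin.snoc (fun i => ContinuousLinearMap.adjoint (A i) (u i))
      (-∑ i, ContinuousLinearMap.adjoint (A i) (u i)), by simp [Fin.sum_univ_castSucc],
    Fin.lastCases ?_ fun i => by simpa using (A i).adjoint_mem_esubdiff_comp (hu i)⟩
  simp only [Fin.snoc_last]
  intro z
  rw [add_comm]
  convert hℓf z using 3
  simp only [inner_neg_right, inner_sum, ContinuousLinearMap.adjoint_inner_right, hℓ, L]
  simp [sub_mul, mul_comm]

theorem statement8_general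
    {X : Type*} [NormedAddCommGroup X] [InnerProductSpace ℝ X] [CompleteSpace X]
    {m : ℕ}
    (f : X → EReal) (hf : Gamma0 f)
    (gs : Fin m → ℝ → EReal) (hgs : ∀ i, Gamma0 (gs i))
    (A : Fin m → (X →L[ℝ] ℝ))
    (Sp : Set X) (hSpdef : Sp = argminSet (fun x => f x + ∑ i, gs i (A i x)))
    (hqc : (0 : Fin m → ℝ) ∈ sriSet
      (edom (fun y : Fin m → ℝ => ∑ i, gs i (y i)) - (fun x => fun i => A i x) '' edom f))
    (Hf : (Fin (m + 1) → X) → EReal)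
    (hHf : ∀ Z, Hf Z = (∑ i : Fin m, gs i (A i (Z i.castSucc))) + f (Z (Fin.last m)))
    (proxH : (Fin (m + 1) → X) → (Fin (m + 1) → X))
    (hproxH : ∀ Z W : Fin (m + 1) → X,
      Hf (proxH Z) + ((((1:ℝ)/2) * ∑ i, ‖proxH Z i - Z i‖ ^ 2 : ℝ) : EReal)
        ≤ Hf W + ((((1:ℝ)/2) * ∑ i, ‖W i - Z i‖ ^ 2 : ℝ) : EReal))
    (T : (Fin (m + 1) → X) → (Fin (m + 1) → X))
    (hT : ∀ Z, T Z =
      (2:ℝ) • proxH (fun i => (2:ℝ) • (((m:ℝ) + 1)⁻¹ • ∑ j, Z j) - Z i)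
        - (fun i => (2:ℝ) • (((m:ℝ) + 1)⁻¹ • ∑ j, Z j) - Z i)) :
    Sp = (fun Z : Fin (m + 1) → X => ((m:ℝ) + 1)⁻¹ • ∑ i, Z i)
      '' {Z : Fin (m + 1) → X | T Z = Z} := by
  -- On `PiLp 2` the squared norm is the sum `∑ ‖Z j‖ ^ 2` occurring in `hproxH`.
  set φ : Fin (m + 1) → X → EReal := Fin.snoc (α := fun _ => X → EReal) (fun i z => gs i (A i z)) f
  set Φ : PiLp 2 (fun _ : Fin (m + 1) => X) → EReal := fun Z => ∑ j, φ j (Z j)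
  have hφ : ∀ j, EConvex (φ j) ∧ ∀ x, φ j x ≠ ⊥ :=
    Fin.lastCases (by simpa [φ] using ⟨hf.2.2, hf.1.2⟩) fun i => by
      simpa [φ] using ⟨(hgs i).2.2.comp_linearMap (A i : X →ₗ[ℝ] ℝ), fun _ => (hgs i).1.2 _⟩
  have hΦbot : ∀ Z, Φ Z ≠ ⊥ := fun Z => EReal.finset_sum_ne_bot fun j _ => (hφ j).2 _
  have hΦconst : ∀ x, Φ (WithLp.toLp 2 fun _ => x) = f x + ∑ i, gs i (A i x) := fun x => by
    simp [Φ, φ, Fin.sum_univ_castSucc, add_comm]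
  have hprox : ∀ Z, IsProxPt Φ (WithLp.toLp 2 Z) (WithLp.toLp 2 (proxH Z)) := fun Z W => by
    simpa [Φ, φ, hHf, PiLp.norm_sq_eq_of_L2, Fin.sum_univ_castSucc] using hproxH Z W.ofLp
  subst hSpdef
  ext x
  constructor
  · intro hx
    obtain ⟨x₀, hx₀⟩ := exists_add_ne_top_of_zero_mem_sriSet hqc
    have hfin := ne_top_of_le_ne_top hx₀ (hx x₀)
    obtain ⟨d, hd0, hd⟩ := exists_sum_eq_zero_mem_esubdiff_of_mem_argminSet hf.2.2
      (fun i => (hgs i).2.2) hf.1.2 (fun i => (hgs i).1.2) A hqc hx hfin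
    obtain ⟨Z, hZ, rfl⟩ := exists_fixedPoint_of_mem_esubdiff hΦbot hprox hd0
      (toLp_mem_esubdiff_sum hd) (by rwa [hΦconst])
    exact ⟨Z, (hT Z).trans hZ, rfl⟩
  · rintro ⟨Z, hZ, rfl⟩ y
    dsimp only
    rw [← hΦconst, ← hΦconst]
    exact mean_mem_argminSet_of_fixedPoint (EConvex.piLp_sum fun j => (hφ j).1) hΦbot hprox
      ((hT Z).symm.trans hZ) y

/-- fixed point characterization of `S_p` via the DRS operator of Type-II:
`S_p` equals the image of `Fix T_DRSII` under `Z ↦ (1/(m+1)) ∑ i Z i` (the first component of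
`P_D`), where `T_DRSII = (2 prox_H - I) ∘ (2 P_D - I)` on `X^{m+1}` and
`P_D Z = (Z̄, …, Z̄)` with `Z̄ = (1/(m+1)) ∑ i Z i`. -/
theorem statement8
    {X : Type*} [NormedAddCommGroup X] [InnerProductSpace ℝ X] [CompleteSpace X]
    {m : ℕ}
    (f : X → EReal) (hf : Gamma0 f)
    (gs : Fin m → ℝ → EReal) (hgs : ∀ i, Gamma0 (gs i))
    (A : Fin m → (X →L[ℝ] ℝ)) (hA : ∀ i, A i ≠ 0)
    (Sp : Set X) (hSpdef : Sp = argminSet (fun x => f x + ∑ i, gs i (A i x)))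
    (hSp : Sp.Nonempty)
    (hqc : (0 : Fin m → ℝ) ∈ sriSet
      (edom (fun y : Fin m → ℝ => ∑ i, gs i (y i)) - (fun x => fun i => A i x) '' edom f))
    (Hf : (Fin (m + 1) → X) → EReal)
    (hHf : ∀ Z, Hf Z = (∑ i : Fin m, gs i (A i (Z i.castSucc))) + f (Z (Fin.last m)))
    (proxH : (Fin (m + 1) → X) → (Fin (m + 1) → X))
    (hproxH : ∀ Z W : Fin (m + 1) → X,
      Hf (proxH Z) + ((((1:ℝ)/2) * ∑ i, ‖proxH Z i - Z i‖ ^ 2 : ℝ) : EReal)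
        ≤ Hf W + ((((1:ℝ)/2) * ∑ i, ‖W i - Z i‖ ^ 2 : ℝ) : EReal))
    (T : (Fin (m + 1) → X) → (Fin (m + 1) → X))
    (hT : ∀ Z, T Z =
      (2:ℝ) • proxH (fun i => (2:ℝ) • (((m:ℝ) + 1)⁻¹ • ∑ j, Z j) - Z i)
        - (fun i => (2:ℝ) • (((m:ℝ) + 1)⁻¹ • ∑ j, Z j) - Z i)) :
    Sp = (fun Z : Fin (m + 1) → X => ((m:ℝ) + 1)⁻¹ • ∑ i, Z i)
      '' {Z : Fin (m + 1) → X | T Z = Z} :=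
  statement8_general f hf gs hgs A Sp hSpdef hqc Hf hHf proxH hproxH T hT
end
end
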